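/- arXiv:1701.00529 — 6 statements merged into one kernel-verified Lean document; each statement's English description precedes it below -/
import Mathlib

section
/- For any z ∈ [0,1], the expected maximum cost of BLRC on the profile (0, z) equals z/2 + 1/6; that is, its additive error over the optimal maximum cost z/2 is exactly 1/6. -/
/-- On the profile (0, z), the expected maximum cost of BLRC equals z/2 + 1/6,
i.e. its additive error over the optimal maximum cost z/2 is exactly 1/6. -/
theorem blrc_error_on_zero_z (z : ℝ) (hz : z ∈ Set.Icc (0:ℝ) 1) :
    (1/3) * max |0 - 1/2| |z - 1/2| + (1/6) * max |0 - 0| |z - 0|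
      + (1/6) * max |0 - z| |z - z| + (1/3) * max |0 - z/2| |z - z/2|
    = z/2 + 1/6 := by
  obtain ⟨h0, h1⟩ := hz
  have ha : |z - 1/2| ≤ (1/2 : ℝ) := abs_le.2 ⟨by linarith, by linarith⟩
  have hb : |(0:ℝ) - 1/2| = 1/2 := by norm_num
  have hc : |z - 0| = z := by rw [sub_zero, abs_of_nonneg h0]
  have hd : |0 - z| = z := by rw [zero_sub, abs_neg, abs_of_nonneg h0]
  have he : |0 - z/2| = z/2 := by rw [zero_sub, abs_neg, abs_of_nonneg (by linarith)]
  have hf : |z - z/2| = z/2 := by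
    have : z - z/2 = z/2 := by ring
    rw [this, abs_of_nonneg (by linarith)]
  have hg : |z - z| = 0 := by simp
  rw [hb, hc, hd, he, hf, hg, show |(0:ℝ) - 0| = 0 by simp]
  rw [max_eq_left ha, max_eq_right h0, max_eq_left h0, max_self]
  ring
end

section
/- The BLRC mechanism is truthful in expectation for two agents: for any true locations x1, x2 ∈ [0,1] and any misreport x1' of agent 1, the expected distance from x1 to the BLRC facility under reports (x1, x2) is at most the expected distance from x1 to the BLRC facility under reports (x1', x2). -/
/-- BLRC is truthful in expectation for two agents. -/
theorem blrc_truthful (x1 x2 x1' : ℝ)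
    (h1 : x1 ∈ Set.Icc (0:ℝ) 1) (h2 : x2 ∈ Set.Icc (0:ℝ) 1)
    (h1' : x1' ∈ Set.Icc (0:ℝ) 1) :
    (fun (a b : ℝ) =>
        (1/3) * |x1 - 1/2| + (1/6) * |x1 - min a b| + (1/6) * |x1 - max a b|
          + (1/3) * |x1 - (min a b + max a b)/2|) x1 x2
      ≤ (fun (a b : ℝ) =>
        (1/3) * |x1 - 1/2| + (1/6) * |x1 - min a b| + (1/6) * |x1 - max a b|
          + (1/3) * |x1 - (min a b + max a b)/2|) x1' x2 := by
  simp only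
  have hsum : min x1 x2 + max x1 x2 = x1 + x2 := min_add_max _ _
  have hsum' : min x1' x2 + max x1' x2 = x1' + x2 := min_add_max _ _
  rw [hsum, hsum']
  have habs : |x1 - min x1 x2| + |x1 - max x1 x2| = |x1 - x2| := by
    rcases le_total x1 x2 with h | h <;>
      simp [min_eq_left, min_eq_right, max_eq_left, max_eq_right, h,
        abs_of_nonpos, abs_of_nonneg, sub_nonneg, sub_nonpos]
  have habs' : |x1 - min x1' x2| + |x1 - max x1' x2| = |x1 - x1'| + |x1 - x2| := by
    rcases le_total x1' x2 with h | h <;>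
      simp [min_eq_left, min_eq_right, max_eq_left, max_eq_right, h] <;> ring
  have hhalf : |x1 - (x1 + x2)/2| = |x1 - x2|/2 := by
    rw [show x1 - (x1 + x2)/2 = (x1 - x2)/2 by ring, abs_div]
    norm_num
  have key : |x1 - x2| ≤ |x1 - x1'| + 2 * |x1 - (x1' + x2)/2| := by
    calc |x1 - x2| = |(x1' - x1) + 2 * (x1 - (x1' + x2)/2)| := by ring_nf
      _ ≤ |x1' - x1| + |2 * (x1 - (x1' + x2)/2)| := abs_add_le _ _
      _ = |x1 - x1'| + 2 * |x1 - (x1' + x2)/2| := by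
          rw [abs_sub_comm, abs_mul]; norm_num
  linarith [habs, habs', hhalf, key]
end

section
/- The Phantom-half mechanism (locating the facility at the median of x_L, x_R, and 1/2) is truthful: for any profile x and any single-agent misreport, the agent's distance to the facility does not decrease. -/
/-- The Phantom-half mechanism (facility at the median of x_L, 1/2, x_R) is
truthful: no single-agent misreport decreases her distance to the facility. -/
theorem phantom_half_truthful {n : ℕ} (hn : 0 < n)
    (x : Fin n → ℝ) (hx : ∀ j, x j ∈ Set.Icc (0:ℝ) 1)
    (i : Fin n) (x' : ℝ) (hx' : x' ∈ Set.Icc (0:ℝ) 1) :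
    (fun v : Fin n → ℝ =>
        min (max (Finset.univ.inf' ⟨⟨0, hn⟩, Finset.mem_univ _⟩ v) (1/2))
            (Finset.univ.sup' ⟨⟨0, hn⟩, Finset.mem_univ _⟩ v))
      |> fun M => |x i - M x| ≤ |x i - M (Function.update x i x')| := by
  have hne : (Finset.univ : Finset (Fin n)).Nonempty := ⟨⟨0, hn⟩, Finset.mem_univ _⟩
  set y := Function.update x i x' with hy
  show |x i - min (max (Finset.univ.inf' hne x) (1/2)) (Finset.univ.sup' hne x)| ≤
    |x i - min (max (Finset.univ.inf' hne y) (1/2)) (Finset.univ.sup' hne y)|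
  set a := Finset.univ.inf' hne x with ha
  set b := Finset.univ.sup' hne x with hb
  set a' := Finset.univ.inf' hne y with ha'
  set b' := Finset.univ.sup' hne y with hb'
  have hax : a ≤ x i := Finset.inf'_le _ (Finset.mem_univ i)
  have hxb : x i ≤ b := Finset.le_sup' _ (Finset.mem_univ i)
  rcases le_or_gt (x i) (1/2) with h12 | h12
  · have hm : min (max a (1/2)) b = min (1/2) b := by
      rw [max_eq_right (hax.trans h12)]
    rw [hm]
    have hxm : x i ≤ min (1/2) b := le_min h12 hxb
    rcases eq_or_lt_of_le hxm with heq | hlt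
    · rw [← heq]; simpa using abs_nonneg _
    · have hxib : x i < b := lt_of_lt_of_le hlt (min_le_right _ _)
      obtain ⟨j, -, hj⟩ := Finset.exists_mem_eq_sup' hne x
      have hji : j ≠ i := by rintro rfl; rw [← hj] at hxib; exact absurd hxib (lt_irrefl _)
      have hbb' : b ≤ b' := by
        have h1 : y j ≤ b' := Finset.le_sup' _ (Finset.mem_univ j)
        rwa [hy, Function.update_of_ne hji, ← hj] at h1
      have hm'ge : min (1/2 : ℝ) b ≤ min (max a' (1/2)) b' :=
        le_min ((min_le_left _ _).trans (le_max_right _ _))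
               ((min_le_right _ _).trans hbb')
      rw [abs_of_nonpos (by linarith), abs_of_nonpos (by linarith)]
      linarith
  · have hab : a ≤ b := hax.trans hxb
    have hm : min (max a (1/2)) b = max a (1/2) :=
      min_eq_left (max_le hab (h12.le.trans hxb))
    rw [hm]
    have hxm : max a (1/2) ≤ x i := max_le hax h12.le
    rcases eq_or_lt_of_le hxm with heq | hlt
    · rw [heq]; simpa using abs_nonneg _
    · have hxia : a < x i := lt_of_le_of_lt (le_max_left a (1/2)) hlt
      obtain ⟨j, -, hj⟩ := Finset.exists_mem_eq_inf' hne x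
      have hji : j ≠ i := by rintro rfl; rw [← hj] at hxia; exact absurd hxia (lt_irrefl _)
      have haa' : a' ≤ a := by
        have h1 : a' ≤ y j := Finset.inf'_le _ (Finset.mem_univ j)
        rwa [hy, Function.update_of_ne hji, ← hj] at h1
      have hm'le : min (max a' (1/2)) b' ≤ max a (1/2) :=
        (min_le_left _ _).trans (max_le_max haa' le_rfl)
      rw [abs_of_nonneg (by linarith), abs_of_nonneg (by linarith)]
      linarith
end

section
/- The Phantom-half mechanism has additive error at most 1/4 for the maximum cost: for any profile with leftmost report x_L and rightmost report x_R in [0,1], max(|x_L - m|, |x_R - m|) - (x_R - x_L)/2 ≤ 1/4, where m = median(x_L, 1/2, x_R). -/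
/-- Phantom-half has additive error at most 1/4 for the maximum cost. -/
theorem phantom_half_error_le_quarter (xL xR : ℝ)
    (hL : xL ∈ Set.Icc (0:ℝ) 1) (hR : xR ∈ Set.Icc (0:ℝ) 1) (hLR : xL ≤ xR) :
    max |xL - min (max xL (1/2)) xR| |xR - min (max xL (1/2)) xR|
      - (xR - xL)/2 ≤ 1/4 := by
  obtain ⟨h0L, hL1⟩ := hL
  obtain ⟨h0R, hR1⟩ := hR
  rcases le_total xL (1/2) with h1 | h1
  · rw [max_eq_right h1]
    rcases le_total xR (1/2) with h2 | h2
    · rw [min_eq_right h2, abs_of_nonpos (by linarith), abs_of_nonneg (by linarith)]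
      rw [sub_le_iff_le_add, max_le_iff]
      constructor <;> linarith
    · rw [min_eq_left h2, abs_of_nonpos (by linarith)]
      rcases le_total xR (1/2) with h3 | h3 <;>
        [rw [abs_of_nonpos (by linarith)]; rw [abs_of_nonneg (by linarith)]] <;>
        rw [sub_le_iff_le_add, max_le_iff] <;> constructor <;> linarith
  · rw [max_eq_left h1, min_eq_left hLR, abs_of_nonpos (by linarith),
      abs_of_nonneg (by linarith), sub_le_iff_le_add, max_le_iff]
    constructor <;> linarith
end

section
/- For any truthful mechanism M mapping profiles of n agents in [0,1] to distributions over [0,1], the mechanism M' on n-1 agents defined by duplicating the last agent's report (M'(x_1,...,x_{n-1}) = M(x_1,...,x_{n-1},x_{n-1})) is truthful and has maximum-cost additive error at most that of M. -/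
open MeasureTheory

private lemma snoc_sup_eq {n : ℕ} (v : Fin (n + 1) → ℝ) (l : ℝ) :
    Finset.univ.sup' Finset.univ_nonempty
        (fun i => |(Fin.snoc v (v (Fin.last n)) : Fin (n+2) → ℝ) i - l|)
      = Finset.univ.sup' Finset.univ_nonempty (fun i => |v i - l|) := by
  apply le_antisymm
  · apply Finset.sup'_le
    intro i _
    induction i using Fin.lastCases with
    | last =>
        simp only [Fin.snoc_last]
        exact Finset.le_sup' (fun i => |v i - l|) (Finset.mem_univ (Fin.last n))
    | cast j =>
        simp only [Fin.snoc_castSucc]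
        exact Finset.le_sup' (fun i => |v i - l|) (Finset.mem_univ j)
  · apply Finset.sup'_le
    intro i _
    have : |v i - l| = |(Fin.snoc v (v (Fin.last n)) : Fin (n+2) → ℝ) i.castSucc - l| := by
      rw [Fin.snoc_castSucc]
    rw [this]
    exact Finset.le_sup' (fun k => |(Fin.snoc v (v (Fin.last n)) : Fin (n+2) → ℝ) k - l|) (Finset.mem_univ i.castSucc)

/-- Duplicating the last agent's report turns a truthful mechanism for n+2
agents into a truthful mechanism for n+1 agents whose maximum-cost additive
error on each profile is at most that of the original mechanism (on the
duplicated profile). -/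
theorem duplicate_agent_reduction {n : ℕ}
    (M : (Fin (n + 2) → ℝ) → Measure ℝ)
    (hprob : ∀ v, IsProbabilityMeasure (M v))
    (htruth : ∀ v : Fin (n + 2) → ℝ, (∀ j, v j ∈ Set.Icc (0:ℝ) 1) →
      ∀ i : Fin (n + 2), ∀ r ∈ Set.Icc (0:ℝ) 1,
        ∫ l, |v i - l| ∂(M v) ≤ ∫ l, |v i - l| ∂(M (Function.update v i r))) :
    ∀ M' : (Fin (n + 1) → ℝ) → Measure ℝ,
      (M' = fun v => M (Fin.snoc v (v (Fin.last n)))) →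
      -- M' is truthful
      ((∀ v : Fin (n + 1) → ℝ, (∀ j, v j ∈ Set.Icc (0:ℝ) 1) →
        ∀ i : Fin (n + 1), ∀ r ∈ Set.Icc (0:ℝ) 1,
          ∫ l, |v i - l| ∂(M' v) ≤ ∫ l, |v i - l| ∂(M' (Function.update v i r))) ∧
      -- and its max-cost additive error at each profile is at most that of M
      -- at the duplicated profile
      (∀ v : Fin (n + 1) → ℝ, (∀ j, v j ∈ Set.Icc (0:ℝ) 1) →
        (∫ l, Finset.univ.sup' Finset.univ_nonempty (fun i => |v i - l|) ∂(M' v))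
            - (⨅ l : Set.Icc (0:ℝ) 1,
                Finset.univ.sup' Finset.univ_nonempty (fun i => |v i - (l:ℝ)|))
          ≤ (∫ l, Finset.univ.sup' Finset.univ_nonempty
                (fun i => |(Fin.snoc v (v (Fin.last n)) : Fin (n+2) → ℝ) i - l|) ∂(M (Fin.snoc v (v (Fin.last n)))))
            - (⨅ l : Set.Icc (0:ℝ) 1,
                Finset.univ.sup' Finset.univ_nonempty
                  (fun i => |(Fin.snoc v (v (Fin.last n)) : Fin (n+2) → ℝ) i - (l:ℝ)|)))) := by
  intro M' hM'
  constructor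
  · -- truthfulness
    intro v hv i r hr
    subst hM'
    set w : Fin (n+2) → ℝ := Fin.snoc v (v (Fin.last n)) with hw
    have hwIcc : ∀ j, w j ∈ Set.Icc (0:ℝ) 1 := by
      intro j
      induction j using Fin.lastCases with
      | last => simpa [hw] using hv (Fin.last n)
      | cast j => simpa [hw] using hv j
    by_cases hi : i = Fin.last n
    · subst hi
      -- two-step deviation
      have step1 := htruth w hwIcc (Fin.last (n+1)) r hr
      set w1 : Fin (n+2) → ℝ := Function.update w (Fin.last (n+1)) r with hw1
      have hw1Icc : ∀ j, w1 j ∈ Set.Icc (0:ℝ) 1 := by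
        intro j
        by_cases h : j = Fin.last (n+1)
        · subst h; simpa [hw1] using hr
        · simp only [hw1, Function.update_of_ne h]; exact hwIcc j
      have hval : w1 ((Fin.last n).castSucc) = v (Fin.last n) := by
        have hne : (Fin.last n).castSucc ≠ Fin.last (n+1) := by
          simp [Fin.ext_iff]
        simp [hw1, Function.update_of_ne hne, hw]
      have step2 := htruth w1 hw1Icc ((Fin.last n).castSucc) r hr
      rw [hval] at step2
      have hwlast : w (Fin.last (n+1)) = v (Fin.last n) := by simp [hw]
      rw [hwlast] at step1
      have hfinal :
          Function.update w1 ((Fin.last n).castSucc) r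
            = Fin.snoc (Function.update v (Fin.last n) r)
                ((Function.update v (Fin.last n) r) (Fin.last n)) := by
        funext k
        induction k using Fin.lastCases with
        | last =>
            have hne : Fin.last (n+1) ≠ (Fin.last n).castSucc := by
              simp [Fin.ext_iff]
            simp [hw1, Function.update_of_ne hne]
        | cast j =>
            by_cases h : j = Fin.last n
            · subst h; simp [hw1]
            · have hne1 : (j.castSucc : Fin (n+2)) ≠ (Fin.last n).castSucc := by
                simpa [Fin.castSucc_inj] using h
              have hne2 : (j.castSucc : Fin (n+2)) ≠ Fin.last (n+1) := by
                simp [Fin.ext_iff, Fin.lt_iff_val_lt_val]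
                omega
              simp [hw1, Function.update_of_ne hne1, Function.update_of_ne hne2,
                Fin.snoc_castSucc, Function.update_of_ne h, hw]
      rw [hfinal] at step2
      simpa using le_trans step1 step2
    · -- i is not last
      have hwi : w i.castSucc = v i := by simp [hw]
      have key := htruth w hwIcc i.castSucc r hr
      rw [hwi] at key
      have hupd :
          Function.update w i.castSucc r
            = Fin.snoc (Function.update v i r)
                ((Function.update v i r) (Fin.last n)) := by
        have hlast : (Function.update v i r) (Fin.last n) = v (Fin.last n) := by
          rw [Function.update_of_ne (Ne.symm hi)]
        rw [hlast]
        funext k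
        induction k using Fin.lastCases with
        | last =>
            have hne : Fin.last (n+1) ≠ (i.castSucc : Fin (n+2)) := by
              simp [Fin.ext_iff]
              omega
            simp [hw, Function.update_of_ne hne]
        | cast j =>
            by_cases h : j = i
            · subst h; simp
            · have hne1 : (j.castSucc : Fin (n+2)) ≠ i.castSucc := by
                simpa [Fin.castSucc_inj] using h
              simp [hw, Function.update_of_ne hne1, Fin.snoc_castSucc,
                Function.update_of_ne h]
      rw [hupd] at key
      simpa using key
  · -- approximation
    intro v hv
    subst hM'
    have hint :
        (∫ l, Finset.univ.sup' Finset.univ_nonempty (fun i => |v i - l|)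
            ∂(M (Fin.snoc v (v (Fin.last n)))))
          = ∫ l, Finset.univ.sup' Finset.univ_nonempty
              (fun i => |(Fin.snoc v (v (Fin.last n)) : Fin (n+2) → ℝ) i - l|)
              ∂(M (Fin.snoc v (v (Fin.last n)))) := by
      congr 1
      funext l
      exact (snoc_sup_eq v l).symm
    have hinf :
        (⨅ l : Set.Icc (0:ℝ) 1,
            Finset.univ.sup' Finset.univ_nonempty (fun i => |v i - (l:ℝ)|))
          = ⨅ l : Set.Icc (0:ℝ) 1,
              Finset.univ.sup' Finset.univ_nonempty
                (fun i => |(Fin.snoc v (v (Fin.last n)) : Fin (n+2) → ℝ) i - (l:ℝ)|) := by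
      congr 1
      funext l
      exact (snoc_sup_eq v l).symm
    simp only [hint, hinf]
    exact le_refl _
end

section
/- Any truthful mechanism on the line is partial group strategyproof: if a set S of agents all located at the same point x simultaneously misreport, none of them can strictly decrease her expected cost. -/
open MeasureTheory

/-- Any truthful (in expectation) single-facility mechanism on the line is
partial group strategyproof: a coalition of co-located agents cannot benefit
by misreporting simultaneously. -/
theorem truthful_implies_partial_group_sp {n : ℕ}
    (M : (Fin n → ℝ) → Measure ℝ)
    (hprob : ∀ v, IsProbabilityMeasure (M v))
    (htruth : ∀ v : Fin n → ℝ, (∀ j, v j ∈ Set.Icc (0:ℝ) 1) →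
      ∀ i : Fin n, ∀ r ∈ Set.Icc (0:ℝ) 1,
        ∫ l, |v i - l| ∂(M v) ≤ ∫ l, |v i - l| ∂(M (Function.update v i r)))
    (S : Finset (Fin n)) (hS : S.Nonempty) (x : ℝ) (hxIcc : x ∈ Set.Icc (0:ℝ) 1)
    (v v' : Fin n → ℝ)
    (hv : ∀ j, v j ∈ Set.Icc (0:ℝ) 1) (hv' : ∀ j, v' j ∈ Set.Icc (0:ℝ) 1)
    (hloc : ∀ i ∈ S, v i = x) (hout : ∀ j ∉ S, v' j = v j) :
    ∫ l, |x - l| ∂(M v) ≤ ∫ l, |x - l| ∂(M v') := by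
  set w : Finset (Fin n) → (Fin n → ℝ) := fun T j => if j ∈ T then v' j else v j with hw
  have key : ∀ T : Finset (Fin n), T ⊆ S →
      ∫ l, |x - l| ∂(M v) ≤ ∫ l, |x - l| ∂(M (w T)) := by
    intro T
    induction T using Finset.induction_on with
    | empty =>
      intro _
      have : w ∅ = v := by funext j; simp [hw]
      rw [this]
    | @insert i T' hiT ih =>
      intro hsub
      have hiS : i ∈ S := hsub (Finset.mem_insert_self i T')
      have hsub' : T' ⊆ S := fun j hj => hsub (Finset.mem_insert_of_mem hj)
      have hx : w T' i = x := by simp [hw, hiT, hloc i hiS]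
      have hupd : Function.update (w T') i (v' i) = w (insert i T') := by
        funext j
        by_cases h : j = i <;> simp [Function.update, hw, h]
      have hwIcc : ∀ j, w T' j ∈ Set.Icc (0:ℝ) 1 := by
        intro j; by_cases h : j ∈ T' <;> simp [hw, h, hv j, hv' j]
      have step := htruth (w T') hwIcc i (v' i) (hv' i)
      rw [hx, hupd] at step
      exact le_trans (ih hsub') step
  have hvS : w S = v' := by
    funext j
    by_cases h : j ∈ S <;> simp [hw, h, hout j]
  have := key S (le_refl S)
  rwa [hvS] at this
end
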